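/- For a prime ideal p of A not containing f⁻¹(J), the localization of A ⋈^f J at the prime p′^f := {(p, f(p)+j) | p ∈ p, j ∈ J} is isomorphic as a ring to the localization A_p. -/

import Mathlib

set_option synthInstance.maxHeartbeats 1000000
set_option maxHeartbeats 1000000
/-- The amalgamation `A ⋈^f J` of `A` with `B` along `J` with respect to `f`,
as a subring of `A × B`. -/
def Amalg {A B : Type*} [CommRing A] [CommRing B] (f : A →+* B) (J : Ideal B) :
    Subring (A × B) where
  carrier := {p | ∃ a : A, ∃ j ∈ J, p = (a, f a + j)}
  zero_mem' := ⟨0, 0, J.zero_mem, by ext <;> simp⟩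
  one_mem' := ⟨1, 0, J.zero_mem, by ext <;> simp⟩
  add_mem' := by
    rintro _ _ ⟨a, j, hj, rfl⟩ ⟨a', j', hj', rfl⟩
    exact ⟨a + a', j + j', J.add_mem hj hj', by simp [Prod.ext_iff]; ring⟩
  neg_mem' := by
    rintro _ ⟨a, j, hj, rfl⟩
    exact ⟨-a, -j, J.neg_mem hj, by simp [Prod.ext_iff]; ring⟩
  mul_mem' := by
    rintro _ _ ⟨a, j, hj, rfl⟩ ⟨a', j', hj', rfl⟩
    refine ⟨a * a', f a * j' + f a' * j + j * j',
      J.add_mem (J.add_mem (J.mul_mem_left _ hj') (J.mul_mem_left _ hj))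
        (J.mul_mem_left _ hj'), by simp [Prod.ext_iff]; ring⟩

/-!
Projecting `A ⋈^f J` onto its first factor is a surjection onto `A` whose kernel `0 × J` is
killed by `(a, 0)` for any `a ∈ f⁻¹(J) \ p`, an element outside `p′^f`, which is the preimage of
`p`. Localizing at `p′^f` therefore inverts an annihilator of the kernel, so the localization
already is `A_p`.
-/

namespace IsLocalization

variable {R A S : Type*} [CommRing R] [CommRing A] [CommRing S]
  [Algebra R A] [Algebra A S] [Algebra R S] [IsScalarTower R A S]

theorem comap_of_surjective (M : Submonoid A) [IsLocalization M S]
    (hsurj : Function.Surjective (algebraMap R A))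
    (hker : ∀ x, algebraMap R A x = 0 → ∃ t ∈ M.comap (algebraMap R A), t * x = 0) :
    IsLocalization (M.comap (algebraMap R A)) S := by
  refine (isLocalization_iff _ _).mpr ⟨fun r ↦ ?_, fun z ↦ ?_, fun {x y} h ↦ ?_⟩
  · rw [IsScalarTower.algebraMap_apply R A S]
    exact map_units (M := M) S ⟨_, r.2⟩
  · obtain ⟨⟨a, s⟩, hz⟩ := surj M z
    obtain ⟨a', rfl⟩ := hsurj a
    obtain ⟨s', hs'⟩ := hsurj s
    refine ⟨⟨a', ⟨s', show algebraMap R A s' ∈ M from hs' ▸ s.2⟩⟩, ?_⟩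
    simpa only [IsScalarTower.algebraMap_apply R A S, hs'] using hz
  · rw [IsScalarTower.algebraMap_apply R A S x, IsScalarTower.algebraMap_apply R A S y] at h
    obtain ⟨c, hc⟩ := exists_of_eq (M := M) h
    obtain ⟨c', hc'⟩ := hsurj c
    obtain ⟨t, ht, htc⟩ :=
      hker (c' * (x - y)) (by rw [map_mul, map_sub, hc', mul_sub, hc, sub_self])
    refine ⟨⟨t * c', mul_mem ht (show algebraMap R A c' ∈ M from hc' ▸ c.2)⟩, ?_⟩
    linear_combination htc

end IsLocalization

namespace Amalg

variable {A B : Type*} [CommRing A] [CommRing B] (f : A →+* B) (J : Ideal B)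

def fst : Amalg f J →+* A := (RingHom.fst A B).comp (Amalg f J).subtype

theorem fst_surjective : Function.Surjective (fst f J) :=
  fun a ↦ ⟨⟨(a, f a), a, 0, J.zero_mem, by simp⟩, rfl⟩

theorem coe_comap_fst (p : Ideal A) :
    (p.comap (fst f J) : Set (Amalg f J)) =
      {x : Amalg f J | ∃ a ∈ p, ∃ j ∈ J, (x : A × B) = (a, f a + j)} := by
  ext x
  obtain ⟨a, j, hj, hx⟩ := x.2
  constructor
  · intro h
    exact ⟨a, by simpa [fst, hx] using h, j, hj, hx⟩
  · rintro ⟨a, ha, j, -, hx⟩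
    simpa [fst, hx] using ha

theorem mk_zero_mem {a : A} (ha : f a ∈ J) : (a, 0) ∈ Amalg f J :=
  ⟨a, -f a, J.neg_mem ha, by simp⟩

theorem mk_zero_mul_eq_zero {a : A} (ha : f a ∈ J) {x : Amalg f J} (hx : fst f J x = 0) :
    (⟨(a, 0), mk_zero_mem f J ha⟩ : Amalg f J) * x = 0 := by
  ext
  · simp [show (x : A × B).1 = 0 from hx]
  · simp

end Amalg

/-- For a prime `p` of `A` not containing `f⁻¹(J)`, the localization of `A ⋈^f J`
at `p′^f = {(p, f(p)+j) | p ∈ p, j ∈ J}` is isomorphic to `A_p`. -/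
theorem amalgamation_localization_at_pprime {A B : Type*} [CommRing A] [CommRing B]
    (f : A →+* B) (J : Ideal B) (p : Ideal A) [hp : p.IsPrime]
    (hJp : ¬ J.comap f ≤ p)
    (P : Ideal (Amalg f J)) [hP : P.IsPrime]
    (hP2 : (P : Set (Amalg f J)) =
      {x : Amalg f J | ∃ a ∈ p, ∃ j ∈ J, (x : A × B) = (a, f a + j)}) :
    Nonempty (Localization.AtPrime P ≃+* Localization.AtPrime p) := by
  obtain ⟨a, haJ, hap⟩ := SetLike.not_le_iff_exists.mp hJp
  obtain rfl : P = p.comap (Amalg.fst f J) :=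
    SetLike.coe_injective (hP2.trans (Amalg.coe_comap_fst f J p).symm)
  let := (Amalg.fst f J).toAlgebra
  have : IsLocalization (p.comap (Amalg.fst f J)).primeCompl (Localization.AtPrime p) :=
    IsLocalization.comap_of_surjective p.primeCompl (Amalg.fst_surjective f J)
      fun _ hx ↦ ⟨_, hap, Amalg.mk_zero_mul_eq_zero f J haJ hx⟩
  exact ⟨(IsLocalization.algEquiv (p.comap (Amalg.fst f J)).primeCompl _
    (Localization.AtPrime p)).toRingEquiv⟩
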